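/- Let R = K[[x,y]]/(xy(x-y)), k ≥ 1 and I = (x^{k+1}, y). Then e₀(I) = k+3 and e₁(I) = 2. -/

import Mathlib

set_option maxHeartbeats 1000000
set_option synthInstance.maxHeartbeats 1000000

open IsLocalRing

/-- The length of the `R`-module `M`, as the Krull dimension of its submodule lattice. -/
noncomputable def modLength (R M : Type*) [CommRing R] [AddCommGroup M] [Module R M] :
    WithBot ℕ∞ :=
  Order.krullDim (Submodule R M)

/-- The subquotient `M/N` of two ideals of `R` (interesting when `N ≤ M`). -/
abbrev idealQuot {R : Type*} [CommRing R] (N M : Ideal R) :=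
  ↥M ⧸ (Submodule.comap M.subtype N)

/-- `M` has (finite) length `m`. -/
def HasLength (R M : Type*) [CommRing R] [AddCommGroup M] [Module R M] (m : ℕ) : Prop :=
  modLength R M = (m : WithBot ℕ∞)

/-- `I` has Hilbert coefficients `e0, e1` in dimension one:
`λ(R/Iⁿ) = e₀·n - e₁` for all large `n`. -/
def HasHilbCoeffs1 {R : Type*} [CommRing R] (I : Ideal R) (e0 e1 : ℤ) : Prop :=
  ∃ N : ℕ, ∀ n ≥ N, ∃ m : ℕ, HasLength R (R ⧸ I ^ n) m ∧ (m : ℤ) = e0 * n - e1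

/-- `I` has Hilbert coefficients `e 0, e 1, ..., e d` in dimension `d`:
`λ(R/I^(n+1)) = ∑ (-1)^i (e i) C(n+d-i, d-i)` for all large `n`. -/
def HasHilbCoeffs {R : Type*} [CommRing R] (I : Ideal R) (d : ℕ) (e : ℕ → ℤ) : Prop :=
  ∃ N : ℕ, ∀ n ≥ N, ∃ m : ℕ, HasLength R (R ⧸ I ^ (n + 1)) m ∧
    (m : ℤ) = ∑ i ∈ Finset.range (d + 1), (-1) ^ i * e i * ((n + d - i).choose (d - i))

/-- `r` is integral over the ideal `I`: it satisfies an equation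
`r^n + a₁ r^(n-1) + ⋯ + aₙ = 0` with `aᵢ ∈ Iⁱ`. -/
def IsIntegralOverIdeal {R : Type*} [CommRing R] (I : Ideal R) (r : R) : Prop :=
  ∃ n : ℕ, 0 < n ∧ ∃ a : ℕ → R, (∀ i, 1 ≤ i → i ≤ n → a i ∈ I ^ i) ∧
    r ^ n + ∑ i ∈ Finset.Icc 1 n, a i * r ^ (n - i) = 0

/-- The integral closure `Ī` of an ideal `I`, as a set. -/
def idealIntClosure {R : Type*} [CommRing R] (I : Ideal R) : Set R :=
  {r | IsIntegralOverIdeal I r}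

/-- An ideal is integrally closed if it contains every element integral over it. -/
def IsIntClosedIdeal {R : Type*} [CommRing R] (I : Ideal R) : Prop :=
  ∀ r, IsIntegralOverIdeal I r → r ∈ I

/-- `J` is a reduction of `I`. -/
def IsReductionOf {R : Type*} [CommRing R] (J I : Ideal R) : Prop :=
  J ≤ I ∧ ∃ n : ℕ, I ^ (n + 1) = J * I ^ n

/-- `J` is a minimal reduction of `I`. -/
def IsMinimalReduction {R : Type*} [CommRing R] (J I : Ideal R) : Prop :=
  IsReductionOf J I ∧ ∀ J', IsReductionOf J' I → J' ≤ J → J' = J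

/-- The reduction number of `I`: the least `r` such that `I^(r+1) = J·I^r` for some
minimal reduction `J` of `I`. -/
noncomputable def reductionNumber {R : Type*} [CommRing R] (I : Ideal R) : ℕ :=
  sInf {r | ∃ J, IsMinimalReduction J I ∧ I ^ (r + 1) = J * I ^ r}

/-- A Noetherian local ring is Cohen-Macaulay iff some regular sequence contained in the
maximal ideal has length equal to the Krull dimension. -/
def IsCMLocalRing (R : Type*) [CommRing R] [IsLocalRing R] : Prop :=
  ∃ (n : ℕ) (s : Fin n → R), (∀ i, s i ∈ maximalIdeal R) ∧
    RingTheory.Sequence.IsRegular R (List.ofFn s) ∧ (n : WithBot ℕ∞) = ringKrullDim R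

/-- The ring `R = K[[x,y]]/(xy(x-y))`. -/
noncomputable abbrev Ring9 (K : Type*) [Field K] :=
  (MvPowerSeries (Fin 2) K) ⧸
    (Ideal.span {(MvPowerSeries.X 0 : MvPowerSeries (Fin 2) K) * (MvPowerSeries.X 1) *
      (MvPowerSeries.X 0 - MvPowerSeries.X 1)})

/-- The ideal `I = (x^{k+1}, y)` of `R = K[[x,y]]/(xy(x-y))`. -/
noncomputable def Ideal9 (K : Type*) [Field K] (k : ℕ) : Ideal (Ring9 K) :=
  Ideal.span
    {Ideal.Quotient.mk _ ((MvPowerSeries.X 0 : MvPowerSeries (Fin 2) K) ^ (k + 1)),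
     Ideal.Quotient.mk _ (MvPowerSeries.X 1 : MvPowerSeries (Fin 2) K)}



section Generic
variable {R M : Type*} [CommRing R] [AddCommGroup M] [Module R M]

lemma aux_strictMono_fin {l : ℕ} (g : Fin (l + 1) → ℕ) (hg : StrictMono g) :
    g 0 + l ≤ g (Fin.last l) := by
  have key : ∀ i : Fin (l + 1), g 0 + (i : ℕ) ≤ g i := by
    intro i
    induction i using Fin.induction with
    | zero => simp
    | succ j ih =>
      have h1 := hg (Fin.castSucc_lt_succ (i := j))
      have h2 : ((j.castSucc : Fin (l+1)) : ℕ) = (j : ℕ) := rfl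
      have h3 : ((j.succ : Fin (l+1)) : ℕ) = (j : ℕ) + 1 := rfl
      omega
  simpa using key (Fin.last l)

lemma hasLength_of_chain (m : ℕ) (P : ℕ → Submodule R M)
    (h0 : P 0 = ⊥) (hm : P m = ⊤)
    (hlt : ∀ j < m, P j < P (j + 1))
    (hcov : ∀ j < m, ∀ N : Submodule R M, P j ≤ N → N ≤ P (j + 1) →
      N = P j ∨ N = P (j + 1)) :
    HasLength R M m := by
  classical
  set F : Submodule R M → ℕ :=
    fun N => ((Finset.range m).filter (fun j => ¬ (N ⊓ P (j + 1) ≤ P j))).card with hF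
  have hsubset : ∀ {N N' : Submodule R M}, N ≤ N' →
      (Finset.range m).filter (fun j => ¬ (N ⊓ P (j + 1) ≤ P j)) ⊆
      (Finset.range m).filter (fun j => ¬ (N' ⊓ P (j + 1) ≤ P j)) := by
    intro N N' hNN'
    intro j hj
    rw [Finset.mem_filter] at hj ⊢
    exact ⟨hj.1, fun hle => hj.2 (le_trans (inf_le_inf_right _ hNN') hle)⟩
  -- key: equal filters + ≤ implies equal
  have hkey : ∀ (N N' : Submodule R M), N ≤ N' →
      ((Finset.range m).filter (fun j => ¬ (N' ⊓ P (j + 1) ≤ P j)) ⊆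
       (Finset.range m).filter (fun j => ¬ (N ⊓ P (j + 1) ≤ P j))) → N' ≤ N := by
    intro N N' hNN' hfil
    have claim : ∀ j, j ≤ m → N' ⊓ P j ≤ N := by
      intro j
      induction j with
      | zero => intro _; rw [h0]; simp
      | succ j ih =>
        intro hj
        have hjm : j < m := hj
        by_cases hc : N' ⊓ P (j + 1) ≤ P j
        · calc N' ⊓ P (j+1) = (N' ⊓ P (j+1)) ⊓ P j := by
                rw [inf_eq_left.mpr hc]
            _ ≤ N' ⊓ P j := by
                exact inf_le_inf_right _ inf_le_left
            _ ≤ N := ih (le_of_lt hjm)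
        · -- j in filter N', hence in filter N
          have hjN : ¬ (N ⊓ P (j + 1) ≤ P j) := by
            have := hfil (Finset.mem_filter.mpr ⟨Finset.mem_range.mpr hjm, hc⟩)
            exact (Finset.mem_filter.mp this).2
          -- (N ⊓ P (j+1)) ⊔ P j = P (j+1) by covering
          have hbetw := hcov j hjm ((N ⊓ P (j+1)) ⊔ P j) le_sup_right
            (sup_le inf_le_right (le_of_lt (hlt j hjm)))
          have hsup : (N ⊓ P (j+1)) ⊔ P j = P (j+1) := by
            rcases hbetw with h | h
            · exfalso; exact hjN (le_sup_left.trans h.le)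
            · exact h
          -- modularity
          have hmod : ((N ⊓ P (j+1)) ⊔ P j) ⊓ N' = (N ⊓ P (j+1)) ⊔ (P j ⊓ N') := by
            exact sup_inf_assoc_of_le _ (le_trans inf_le_left hNN')
          calc N' ⊓ P (j+1) = ((N ⊓ P (j+1)) ⊔ P j) ⊓ N' := by rw [hsup, inf_comm]
            _ = (N ⊓ P (j+1)) ⊔ (P j ⊓ N') := hmod
            _ ≤ N := by
                apply sup_le inf_le_left
                calc P j ⊓ N' = N' ⊓ P j := inf_comm _ _
                  _ ≤ N := ih (le_of_lt hjm)
    have := claim m le_rfl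
    rwa [hm, inf_top_eq] at this
  have hstrict : StrictMono F := by
    intro N N' hNN'
    rw [hF]
    apply Finset.card_lt_card
    refine ⟨hsubset hNN'.le, ?_⟩
    intro hcon
    exact hNN'.not_ge (hkey N N' hNN'.le hcon)
  have hFle : ∀ N, F N ≤ m := fun N =>
    le_trans (Finset.card_filter_le _ _) (by simp)
  -- chain of length m
  have hPmono : ∀ i j, i ≤ j → j ≤ m → P i ≤ P j := by
    intro i j hij hjm
    induction j with
    | zero =>
      have : i = 0 := by omega
      subst this; exact le_rfl
    | succ j ih =>
      rcases Nat.lt_or_ge i (j+1) with h | h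
      · exact le_trans (ih (by omega) (by omega)) (le_of_lt (hlt j (by omega)))
      · have : i = j + 1 := by omega
        subst this; exact le_rfl
  have hPsm : ∀ i j, i < j → j ≤ m → P i < P j := by
    intro i j hij hjm
    exact lt_of_lt_of_le (hlt i (by omega)) (hPmono (i+1) j (by omega) hjm)
  let q : LTSeries (Submodule R M) :=
    ⟨m, fun i => P i, fun i => by
      exact hPsm i (i+1) (by omega) (by
        have := i.2
        omega)⟩
  have hlow : (m : WithBot ℕ∞) ≤ Order.krullDim (Submodule R M) := by
    have := Order.LTSeries.length_le_krullDim q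
    simpa using this
  have hhigh : Order.krullDim (Submodule R M) ≤ (m : WithBot ℕ∞) := by
    rw [Order.krullDim_eq_iSup_length]
    have main : (⨆ p : LTSeries (Submodule R M), (p.length : ℕ∞)) ≤ (m : ℕ∞) := by
      apply iSup_le
      intro p
      have hsm : StrictMono (F ∘ p.toFun) := hstrict.comp p.strictMono
      have := aux_strictMono_fin (F ∘ p.toFun) hsm
      have hlen : p.length ≤ m := by
        have h2 := hFle (p.toFun (Fin.last p.length))
        simp only [Function.comp] at this
        omega
      exact_mod_cast hlen
    exact_mod_cast main
  exact le_antisymm hhigh hlow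

end Generic


namespace Aux9
open MvPowerSeries Finsupp

variable {K : Type*} [Field K]

/-- The exponent function `(a, b) ↦ x^a y^b`. -/
noncomputable def D (a b : ℕ) : Fin 2 →₀ ℕ := Finsupp.single 0 a + Finsupp.single 1 b

lemma D_apply0 (a b : ℕ) : D a b 0 = a := by
  simp [D, Finsupp.single_apply]

lemma D_apply1 (a b : ℕ) : D a b 1 = b := by
  simp [D, Finsupp.single_apply]

lemma D_le_iff {a b a' b' : ℕ} : D a b ≤ D a' b' ↔ a ≤ a' ∧ b ≤ b' := by
  rw [Finsupp.le_def]
  constructor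
  · intro h
    exact ⟨by simpa [D_apply0] using h 0, by simpa [D_apply1] using h 1⟩
  · intro ⟨h1, h2⟩ s
    match s with
    | 0 => simpa [D_apply0] using h1
    | 1 => simpa [D_apply1] using h2

lemma D_sub (a b a' b' : ℕ) : D a b - D a' b' = D (a - a') (b - b') := by
  ext s
  match s with
  | 0 => simp [Finsupp.tsub_apply, D_apply0]
  | 1 => simp [Finsupp.tsub_apply, D_apply1]

lemma D_eq_iff {a b a' b' : ℕ} : D a b = D a' b' ↔ a = a' ∧ b = b' := by
  constructor
  · intro h
    constructor
    · rw [← D_apply0 a b, h, D_apply0]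
    · rw [← D_apply1 a b, h, D_apply1]
  · rintro ⟨rfl, rfl⟩; rfl

lemma D_a0 (a : ℕ) : D a 0 = Finsupp.single 0 a := by simp [D]
lemma D_0b (b : ℕ) : D 0 b = Finsupp.single 1 b := by simp [D]

lemma X0_pow_eq (a : ℕ) :
    (X 0 : MvPowerSeries (Fin 2) K) ^ a = monomial (R := K) (D a 0) 1 := by
  rw [X_pow_eq, D_a0]

lemma X1_pow_eq (b : ℕ) :
    (X 1 : MvPowerSeries (Fin 2) K) ^ b = monomial (R := K) (D 0 b) 1 := by
  rw [X_pow_eq, D_0b]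

lemma XY_pow_eq (a b : ℕ) :
    (X 0 : MvPowerSeries (Fin 2) K) ^ a * (X 1) ^ b = monomial (R := K) (D a b) 1 := by
  rw [X_pow_eq, X_pow_eq, monomial_mul_monomial, one_mul, D]

/-- `ρ = x y (x - y)` as difference of monomials. -/
lemma rho_eq :
    (X 0 : MvPowerSeries (Fin 2) K) * (X 1) * (X 0 - X 1) =
      monomial (R := K) (D 2 1) 1 - monomial (R := K) (D 1 2) 1 := by
  have h1 : (X 0 : MvPowerSeries (Fin 2) K) * (X 1) * (X 0 - X 1) =
      (X 0) ^ 2 * (X 1) ^ 1 - (X 0) ^ 1 * (X 1) ^ 2 := by ring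
  rw [h1, XY_pow_eq, XY_pow_eq]

/-- Membership in `(x, y)` for constant-term-zero power series. -/
lemma mem_span_XY (F : MvPowerSeries (Fin 2) K) (hF : constantCoeff (σ := Fin 2) (R := K) F = 0) :
    F ∈ Ideal.span {(X 0 : MvPowerSeries (Fin 2) K), X 1} := by
  classical
  set F1 : MvPowerSeries (Fin 2) K := fun m => if m 0 = 0 then 0 else F m with hF1
  set F2 : MvPowerSeries (Fin 2) K := fun m => if m 0 = 0 then F m else 0 with hF2
  have hsplit : F = F1 + F2 := by
    apply MvPowerSeries.ext
    intro n
    show F n = (F1 + F2) n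
    show F n = F1 n + F2 n
    rw [hF1, hF2]
    by_cases h : n 0 = 0 <;> simp [h]
  have hd1 : (X 0 : MvPowerSeries (Fin 2) K) ∣ F1 := by
    rw [X_dvd_iff]
    intro m hm
    rw [coeff_apply, hF1]
    simp [hm]
  have hd2 : (X 1 : MvPowerSeries (Fin 2) K) ∣ F2 := by
    rw [X_dvd_iff]
    intro m hm
    show (if m 0 = 0 then F m else 0) = 0
    by_cases h : m 0 = 0
    · have hm0 : m = 0 := by
        ext s
        match s with
        | 0 => simpa using h
        | 1 => simpa using hm
      rw [if_pos h, hm0]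
      exact hF
    · simp [h]
  obtain ⟨g, hg⟩ := hd1
  obtain ⟨h, hh⟩ := hd2
  rw [hsplit, hg, hh]
  exact Ideal.add_mem _
    (Ideal.mul_mem_right _ _ (Ideal.subset_span (by simp)))
    (Ideal.mul_mem_right _ _ (Ideal.subset_span (by simp)))

/-- Non-membership: `x^a ∉ (x^b, y)` for `a < b`. -/
lemma not_mem_x_pow {a b : ℕ} (hab : a < b) :
    (X 0 : MvPowerSeries (Fin 2) K) ^ a ∉
      Ideal.span {(X 0 : MvPowerSeries (Fin 2) K) ^ b, X 1} := by
  classical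
  intro hmem
  obtain ⟨f, g, hfg⟩ := Ideal.mem_span_pair.mp hmem
  have := congrArg (coeff (R := K) (D a 0)) hfg
  rw [map_add, X0_pow_eq, X0_pow_eq, coeff_mul_monomial, coeff_monomial_same] at this
  rw [show (X 1 : MvPowerSeries (Fin 2) K) = (X 0 : MvPowerSeries (Fin 2) K)^0 * (X 1)^1 by
    ring, XY_pow_eq, coeff_mul_monomial] at this
  rw [if_neg (by rw [D_le_iff]; omega), if_neg (by rw [D_le_iff]; omega)] at this
  simp at this

/-- Non-membership: `y^b ∉ (x, y^(b+1))`. -/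
lemma not_mem_y_pow (b : ℕ) :
    (X 1 : MvPowerSeries (Fin 2) K) ^ b ∉
      Ideal.span {(X 0 : MvPowerSeries (Fin 2) K), (X 1 : MvPowerSeries (Fin 2) K) ^ (b+1)} := by
  classical
  intro hmem
  obtain ⟨f, g, hfg⟩ := Ideal.mem_span_pair.mp hmem
  have := congrArg (coeff (R := K) (D 0 b)) hfg
  rw [map_add, X1_pow_eq, X1_pow_eq, coeff_mul_monomial, coeff_monomial_same] at this
  rw [show (X 0 : MvPowerSeries (Fin 2) K) = (X 0 : MvPowerSeries (Fin 2) K)^1 * (X 1)^0 by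
    ring, XY_pow_eq, coeff_mul_monomial] at this
  rw [if_neg (by rw [D_le_iff]; omega), if_neg (by rw [D_le_iff]; omega)] at this
  simp at this

/-- Non-membership: `x y^c ∉ (x^A, y^(c+1), ρ)` for `1 ≤ c`, `c + 2 ≤ A`. -/
lemma not_mem_xy_pow {c A : ℕ} (hc : 1 ≤ c) (hA : c + 2 ≤ A) :
    (X 0 : MvPowerSeries (Fin 2) K) * (X 1) ^ c ∉
      Ideal.span {(X 0 : MvPowerSeries (Fin 2) K) ^ A,
        (X 1 : MvPowerSeries (Fin 2) K) ^ (c + 1),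
        (X 0 : MvPowerSeries (Fin 2) K) * (X 1) * (X 0 - X 1)} := by
  classical
  intro hmem
  obtain ⟨f, z, hz, hfz⟩ := Ideal.mem_span_insert.mp hmem
  obtain ⟨g, h, hgh⟩ := Ideal.mem_span_pair.mp hz
  rw [← hgh] at hfz
  -- apply the linear functional L = ∑_{i<c} coeff (D (i+1) (c-i))
  have hL := congrArg (fun φ => ∑ i ∈ Finset.range c, coeff (R := K) (D (i+1) (c-i)) φ) hfz
  simp only [map_add] at hL
  rw [Finset.sum_add_distrib, Finset.sum_add_distrib] at hL
  -- LHS : L(x y^c) = 1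
  have hLHS : ∑ i ∈ Finset.range c, coeff (R := K) (D (i+1) (c-i))
      ((X 0 : MvPowerSeries (Fin 2) K) * (X 1) ^ c) = 1 := by
    rw [show (X 0 : MvPowerSeries (Fin 2) K) * (X 1)^c = (X 0)^1 * (X 1)^c by ring,
      XY_pow_eq]
    rw [Finset.sum_eq_single_of_mem 0 (Finset.mem_range.mpr (by omega))]
    · rw [Nat.sub_zero, coeff_monomial_same]
    · intro i _ hi
      rw [coeff_monomial, if_neg (fun hD => hi (by
        have := (D_eq_iff.mp hD).1; omega))]
  -- term 1 : L(f x^A) = 0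
  have hT1 : ∑ i ∈ Finset.range c, coeff (R := K) (D (i+1) (c-i))
      (f * (X 0 : MvPowerSeries (Fin 2) K) ^ A) = 0 := by
    apply Finset.sum_eq_zero
    intro i hi
    rw [Finset.mem_range] at hi
    rw [show ((X 0 : MvPowerSeries (Fin 2) K) ^ A) = (X 0)^A * (X 1)^0 by ring, XY_pow_eq,
      coeff_mul_monomial, if_neg (fun hD => by have := (D_le_iff.mp hD).1; omega)]
  -- term 2 : L(g y^(c+1)) = 0
  have hT2 : ∑ i ∈ Finset.range c, coeff (R := K) (D (i+1) (c-i))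
      (g * (X 1 : MvPowerSeries (Fin 2) K) ^ (c+1)) = 0 := by
    apply Finset.sum_eq_zero
    intro i hi
    rw [Finset.mem_range] at hi
    rw [show ((X 1 : MvPowerSeries (Fin 2) K) ^ (c+1)) = (X 0)^0 * (X 1)^(c+1) by ring,
      XY_pow_eq, coeff_mul_monomial, if_neg (fun hD => by have := (D_le_iff.mp hD).2; omega)]
  -- term 3 : L(h ρ) = 0
  have hT3 : ∑ i ∈ Finset.range c, coeff (R := K) (D (i+1) (c-i))
      (h * ((X 0 : MvPowerSeries (Fin 2) K) * (X 1) * (X 0 - X 1))) = 0 := by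
    rw [rho_eq]
    have expand : ∀ i : ℕ, i < c → coeff (R := K) (D (i+1) (c-i))
        (h * ((monomial (R := K) (D 2 1)) 1 - (monomial (R := K) (D 1 2)) 1)) =
        (if i = 0 then 0 else coeff (R := K) (D (i-1) (c-i-1)) h) -
        (if i = c - 1 then 0 else coeff (R := K) (D i (c-i-2)) h) := by
      intro i hi
      rw [mul_sub, map_sub, coeff_mul_monomial, coeff_mul_monomial]
      congr 1
      · by_cases h0 : i = 0
        · rw [if_pos h0, if_neg (fun hD => by have := (D_le_iff.mp hD).1; omega)]
        · rw [if_neg h0, if_pos (D_le_iff.mpr ⟨by omega, by omega⟩), D_sub, mul_one]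
          exact congrArg (fun p => coeff (R := K) p h) (D_eq_iff.mpr ⟨by omega, by omega⟩)
      · by_cases hlast : i = c - 1
        · rw [if_pos hlast, if_neg (fun hD => by have := (D_le_iff.mp hD).2; omega)]
        · rw [if_neg hlast, if_pos (D_le_iff.mpr ⟨by omega, by omega⟩), D_sub, mul_one]
          exact congrArg (fun p => coeff (R := K) p h) (D_eq_iff.mpr ⟨by omega, by omega⟩)
    rw [Finset.sum_congr rfl (fun i hi => expand i (Finset.mem_range.mp hi))]
    rw [Finset.sum_sub_distrib]
    rw [sub_eq_zero]
    obtain ⟨c', rfl⟩ : ∃ c', c = c' + 1 := ⟨c - 1, by omega⟩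
    rw [Finset.sum_range_succ' _ c', Finset.sum_range_succ]
    rw [if_pos rfl, if_pos (by omega), add_zero, add_zero]
    apply Finset.sum_congr rfl
    intro j hj
    rw [Finset.mem_range] at hj
    rw [if_neg (by omega), if_neg (by omega)]
    exact congrArg (fun p => coeff (R := K) p h) (D_eq_iff.mpr ⟨by omega, by omega⟩)
  rw [hLHS, hT1, hT2, hT3] at hL
  simp at hL

end Aux9

namespace Aux9
open MvPowerSeries

variable (K : Type*) [Field K]

/-- The relation `ρ = x y (x - y)`. -/
noncomputable abbrev rr : MvPowerSeries (Fin 2) K :=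
  (X 0 : MvPowerSeries (Fin 2) K) * (X 1) * (X 0 - X 1)

/-- The projection onto `Ring9 K`. -/
noncomputable def pr : MvPowerSeries (Fin 2) K →+* Ring9 K :=
  Ideal.Quotient.mk (Ideal.span {rr K})

noncomputable def xx : Ring9 K := pr K (X 0)
noncomputable def yy : Ring9 K := pr K (X 1)

lemma pr_surj : Function.Surjective (pr K) := Ideal.Quotient.mk_surjective

/-- The basic relation `x² y = x y²` in `Ring9 K`. -/
lemma rel : xx K ^ 2 * yy K = xx K * yy K ^ 2 := by
  rw [xx, yy, ← map_pow, ← map_pow, ← map_mul, ← map_mul]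
  rw [pr, Ideal.Quotient.mk_eq_mk_iff_sub_mem]
  exact Ideal.mem_span_singleton'.mpr ⟨1, by ring⟩

lemma xx_mul_xy (c : ℕ) (hc : 1 ≤ c) :
    xx K * (xx K * yy K ^ c) = xx K * yy K ^ (c + 1) := by
  obtain ⟨c', rfl⟩ : ∃ c', c = c' + 1 := ⟨c - 1, by omega⟩
  have h1 : xx K * (xx K * yy K ^ (c' + 1)) = (xx K ^ 2 * yy K) * yy K ^ c' := by ring
  rw [h1, rel]; ring

lemma xpow_mul_y (a : ℕ) (ha : 1 ≤ a) : xx K ^ a * yy K = xx K * yy K ^ a := by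
  induction a with
  | zero => omega
  | succ a ih =>
    rcases Nat.eq_or_lt_of_le ha with h | h
    · rw [← h]; ring
    · have ha' : 1 ≤ a := by omega
      have : xx K ^ (a + 1) * yy K = xx K * (xx K ^ a * yy K) := by ring
      rw [this, ih ha', xx_mul_xy K a ha']

lemma xpow_mul_ypow (a b : ℕ) (ha : 1 ≤ a) (hb : 1 ≤ b) :
    xx K ^ a * yy K ^ b = xx K * yy K ^ (a + b - 1) := by
  induction b with
  | zero => omega
  | succ b ih =>
    rcases Nat.eq_or_lt_of_le hb with h | h
    · rw [← h, pow_one, xpow_mul_y K a ha]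
      simp
    · have hb' : 1 ≤ b := by omega
      have h1 : xx K ^ a * yy K ^ (b + 1) = (xx K ^ a * yy K ^ b) * yy K := by ring
      rw [h1, ih hb', show a + (b+1) - 1 = (a + b - 1) + 1 by omega]
      ring

/-- `I^n = (x^{(k+1)n}, y^n)`. -/
lemma Ideal9_pow (k n : ℕ) (hk : 1 ≤ k) (hn : 1 ≤ n) :
    (Ideal9 K k) ^ n = Ideal.span {xx K ^ ((k+1)*n), yy K ^ n} := by
  have hI : Ideal9 K k = Ideal.span {xx K ^ (k+1), yy K} := by
    rw [Ideal9, xx, yy, map_pow]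
    rfl
  induction n with
  | zero => omega
  | succ n ih =>
    rcases Nat.eq_or_lt_of_le hn with h | h
    · rw [← h, pow_one, hI]
      norm_num
    · have hn' : 1 ≤ n := by omega
      have ihn := ih hn'
      rw [pow_succ (Ideal9 K k), ihn, hI]
      apply le_antisymm
      · rw [Ideal.mul_le]
        intro r hr s hs
        obtain ⟨ar, br, hr⟩ := Ideal.mem_span_pair.mp hr
        obtain ⟨as, bs, hs⟩ := Ideal.mem_span_pair.mp hs
        rw [← hr, ← hs]
        have e1 : xx K ^ ((k+1)*n) * xx K ^ (k+1) = xx K ^ ((k+1)*(n+1)) := by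
          rw [← pow_add, show (k+1)*n + (k+1) = (k+1)*(n+1) from by ring]
        have hAn : n + 1 ≤ (k+1)*n := by nlinarith
        have e2 : xx K ^ ((k+1)*n) * yy K = (xx K * yy K ^ ((k+1)*n - (n+1))) * yy K ^ (n+1) := by
          calc xx K ^ ((k+1)*n) * yy K = xx K * yy K ^ ((k+1)*n) :=
                xpow_mul_y K _ (by omega)
            _ = xx K * yy K ^ ((k+1)*n - (n+1) + (n+1)) := by
                rw [Nat.sub_add_cancel hAn]
            _ = (xx K * yy K ^ ((k+1)*n - (n+1))) * yy K ^ (n+1) := by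
                rw [pow_add]; ring
        have e3 : yy K ^ n * xx K ^ (k+1) = (xx K * yy K ^ (k + n - (n+1))) * yy K ^ (n+1) := by
          calc yy K ^ n * xx K ^ (k+1) = xx K ^ (k+1) * yy K ^ n := by ring
            _ = xx K * yy K ^ (k + 1 + n - 1) := xpow_mul_ypow K _ _ (by omega) hn'
            _ = xx K * yy K ^ (k + n - (n+1) + (n+1)) := by
                rw [show k + n - (n+1) + (n+1) = k + 1 + n - 1 from by omega]
            _ = (xx K * yy K ^ (k + n - (n+1))) * yy K ^ (n+1) := by
                rw [pow_add]; ring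
        have e4 : yy K ^ n * yy K = yy K ^ (n+1) := by rw [← pow_succ]
        have expand : (ar * xx K ^ ((k+1)*n) + br * yy K ^ n) *
            (as * xx K ^ (k+1) + bs * yy K) =
            (ar * as) * (xx K ^ ((k+1)*n) * xx K ^ (k+1)) +
            ((ar * bs) * (xx K ^ ((k+1)*n) * yy K) +
            ((br * as) * (yy K ^ n * xx K ^ (k+1)) +
            (br * bs) * (yy K ^ n * yy K))) := by ring
        rw [expand, e1, e2, e3, e4]
        have m1 : xx K ^ ((k+1)*(n+1)) ∈
            Ideal.span {xx K ^ ((k+1)*(n+1)), yy K ^ (n+1)} :=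
          Ideal.subset_span (by simp)
        have m2 : yy K ^ (n+1) ∈
            Ideal.span {xx K ^ ((k+1)*(n+1)), yy K ^ (n+1)} :=
          Ideal.subset_span (by simp)
        apply Ideal.add_mem _ (Ideal.mul_mem_left _ _ m1)
        apply Ideal.add_mem _ (Ideal.mul_mem_left _ _ (Ideal.mul_mem_left _ _ m2))
        apply Ideal.add_mem _ (Ideal.mul_mem_left _ _ (Ideal.mul_mem_left _ _ m2))
        exact Ideal.mul_mem_left _ _ m2
      · rw [Ideal.span_le]
        rintro z (rfl | rfl)
        · have : (xx K ^ ((k+1)*(n+1)) : Ring9 K) =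
              xx K ^ ((k+1)*n) * xx K ^ (k+1) := by
            rw [← pow_add, show (k+1)*(n+1) = (k+1)*n + (k+1) from by ring]
          rw [this]
          exact Ideal.mul_mem_mul (Ideal.subset_span (by simp)) (Ideal.subset_span (by simp))
        · rw [show (yy K ^ (n+1) : Ring9 K) = yy K ^ n * yy K by rw [← pow_succ]]
          exact Ideal.mul_mem_mul (Ideal.subset_span (by simp)) (Ideal.subset_span (by simp))

/-- Transfer of ideal membership to the quotient. -/
lemma mem_pr_span_iff (s : Set (MvPowerSeries (Fin 2) K)) (F : MvPowerSeries (Fin 2) K) :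
    pr K F ∈ Ideal.span (pr K '' s) ↔ F ∈ Ideal.span (s ∪ {rr K}) := by
  rw [← Ideal.map_span, pr, Ideal.mem_quotient_iff_mem_sup, Ideal.span_union]

/-- Scalar decomposition in `Ring9 K`. -/
lemma scalar_decomp (f : Ring9 K) : ∃ (c : K) (g : Ring9 K),
    g ∈ Ideal.span {xx K, yy K} ∧ f = pr K (C (σ := Fin 2) (R := K) c) + g := by
  obtain ⟨F, rfl⟩ := pr_surj K f
  refine ⟨constantCoeff (σ := Fin 2) (R := K) F, pr K (F - C (σ := Fin 2) (R := K) (constantCoeff (σ := Fin 2) (R := K) F)), ?_, ?_⟩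
  · have hmem := mem_span_XY (F - C (σ := Fin 2) (R := K) (constantCoeff (σ := Fin 2) (R := K) F))
      (by rw [map_sub, constantCoeff_C, sub_self])
    have := Ideal.mem_map_of_mem (pr K) hmem
    rw [Ideal.map_span, Set.image_pair] at this
    exact this
  · rw [← map_add]
    congr 1
    ring

/-- The covering property of a one-step extension. -/
lemma cov_step (Q : Ideal (Ring9 K)) (v : Ring9 K)
    (hx : xx K * v ∈ Q) (hy : yy K * v ∈ Q) :
    ∀ N : Ideal (Ring9 K), Q ≤ N → N ≤ Q ⊔ Ideal.span {v} →
      N = Q ∨ N = Q ⊔ Ideal.span {v} := by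
  intro N hQN hNle
  by_cases hN : N ≤ Q
  · exact Or.inl (le_antisymm hN hQN)
  right
  obtain ⟨u, huN, huQ⟩ := SetLike.not_le_iff_exists.mp hN
  obtain ⟨w, hw, z, hz, huwz⟩ := Submodule.mem_sup.mp (hNle huN)
  obtain ⟨f, rfl⟩ := Ideal.mem_span_singleton'.mp hz
  obtain ⟨c, g, hg, rfl⟩ := scalar_decomp K f
  have hgv : g * v ∈ Q := by
    obtain ⟨a, b, hab⟩ := Ideal.mem_span_pair.mp hg
    have hgveq : g * v = a * (xx K * v) + b * (yy K * v) := by rw [← hab]; ring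
    rw [hgveq]
    exact Ideal.add_mem _ (Ideal.mul_mem_left _ _ hx) (Ideal.mul_mem_left _ _ hy)
  have hc : c ≠ 0 := by
    rintro rfl
    apply huQ
    rw [← huwz, map_zero, map_zero, zero_add]
    exact Ideal.add_mem _ hw hgv
  have hvN : v ∈ N := by
    have h1 : pr K (C (σ := Fin 2) (R := K) c) * v ∈ N := by
      have : pr K (C (σ := Fin 2) (R := K) c) * v = u - w - g * v := by
        rw [← huwz]; ring
      rw [this]
      exact Submodule.sub_mem _ (Submodule.sub_mem _ huN (hQN hw)) (hQN hgv)
    have h2 : v = pr K (C (σ := Fin 2) (R := K) c⁻¹) * (pr K (C (σ := Fin 2) (R := K) c) * v) := by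
      rw [← mul_assoc, ← map_mul, ← map_mul, inv_mul_cancel₀ hc, map_one, map_one, one_mul]
    rw [h2]
    exact Ideal.mul_mem_left _ _ h1
  refine le_antisymm hNle (sup_le hQN ?_)
  rw [Ideal.span_le, Set.singleton_subset_iff]
  exact hvN

end Aux9

namespace Aux9
open MvPowerSeries

variable (K : Type*) [Field K]

/-- The element adjoined at step `j` of the chain. -/
noncomputable def vS (k n j : ℕ) : MvPowerSeries (Fin 2) K :=
  if j < n - 1 then X 0 * X 1 ^ (n - 1 - j)
  else if j < 2 * (n - 1) then X 1 ^ (2 * (n - 1) - j)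
  else if j < 2 * (n - 1) + ((k+1) * n - 1) then
    X 0 ^ ((k+1) * n - 1 - (j - 2 * (n - 1)))
  else 1

/-- Generators at stage `j`. -/
noncomputable def genS (k n j : ℕ) : Set (MvPowerSeries (Fin 2) K) :=
  {X 0 ^ ((k+1)*n), X 1 ^ n} ∪ (vS K k n '' {i | i < j})

/-- The chain of ideals in `Ring9 K`. -/
noncomputable def Qc (k n j : ℕ) : Ideal (Ring9 K) :=
  Ideal.span (pr K '' genS K k n j)

variable {k n : ℕ} (hk : 1 ≤ k) (hn : 1 ≤ n)

lemma vS_case1 {j : ℕ} (h : j < n - 1) : vS K k n j = X 0 * X 1 ^ (n - 1 - j) := if_pos h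

lemma vS_case2 {j : ℕ} (h1 : ¬ j < n - 1) (h2 : j < 2 * (n - 1)) :
    vS K k n j = X 1 ^ (2 * (n - 1) - j) := by rw [vS, if_neg h1, if_pos h2]

lemma vS_case3 {j : ℕ} (h1 : ¬ j < n - 1) (h2 : ¬ j < 2 * (n - 1))
    (h3 : j < 2 * (n - 1) + ((k+1) * n - 1)) :
    vS K k n j = X 0 ^ ((k+1) * n - 1 - (j - 2 * (n - 1))) := by
  rw [vS, if_neg h1, if_neg h2, if_pos h3]

lemma vS_case4 {j : ℕ} (h1 : ¬ j < n - 1) (h2 : ¬ j < 2 * (n - 1))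
    (h3 : ¬ j < 2 * (n - 1) + ((k+1) * n - 1)) :
    vS K k n j = 1 := by rw [vS, if_neg h1, if_neg h2, if_neg h3]

lemma vmem {i j : ℕ} (hij : i < j) : pr K (vS K k n i) ∈ Qc K k n j :=
  Ideal.subset_span ⟨vS K k n i, Or.inr ⟨i, hij, rfl⟩, rfl⟩

lemma xA_mem (j : ℕ) : xx K ^ ((k+1)*n) ∈ Qc K k n j := by
  have : pr K (X 0 ^ ((k+1)*n)) ∈ Qc K k n j :=
    Ideal.subset_span ⟨_, Or.inl (by simp), rfl⟩
  rwa [map_pow] at this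

lemma yn_mem (j : ℕ) : yy K ^ n ∈ Qc K k n j := by
  have : pr K (X 1 ^ n) ∈ Qc K k n j :=
    Ideal.subset_span ⟨_, Or.inl (by simp), rfl⟩
  rwa [map_pow] at this

/-- `x y^e ∈ Q_j` whenever `n ≤ e`. -/
lemma xy_high_mem {e : ℕ} (he : n ≤ e) (j : ℕ) : xx K * yy K ^ e ∈ Qc K k n j := by
  obtain ⟨d, rfl⟩ : ∃ d, e = d + n := ⟨e - n, by omega⟩
  have h1 : xx K * yy K ^ (d + n) = (xx K * yy K ^ d) * yy K ^ n := by
    rw [pow_add]; ring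
  rw [h1]
  exact Ideal.mul_mem_left _ _ (yn_mem K j)

/-- `x y^c ∈ Q_j` for `1 ≤ c ≤ n-1`, provided `n-1-c < j`. -/
lemma xyc_mem {c j : ℕ} (hc1 : 1 ≤ c) (hc2 : c ≤ n - 1) (hj : n - 1 - c < j) :
    xx K * yy K ^ c ∈ Qc K k n j := by
  have hv := vmem (K := K) (k := k) (n := n) hj
  rw [vS_case1 K (by omega), show n - 1 - (n - 1 - c) = c by omega, map_mul, map_pow] at hv
  exact hv

/-- `y^b ∈ Q_j` for `1 ≤ b ≤ n-1`, provided `2(n-1)-b < j`. -/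
lemma yb_mem {b j : ℕ} (hb1 : 1 ≤ b) (hb2 : b ≤ n - 1) (hj : 2 * (n - 1) - b < j) :
    yy K ^ b ∈ Qc K k n j := by
  have hv := vmem (K := K) (k := k) (n := n) hj
  rw [vS_case2 K (by omega) (by omega), show 2*(n-1) - (2*(n-1) - b) = b by omega,
    map_pow] at hv
  exact hv

/-- `x^a ∈ Q_j` for `1 ≤ a ≤ A-1`, provided `2(n-1)+(A-1-a) < j`. -/
lemma xa_mem {a j : ℕ} (ha1 : 1 ≤ a) (ha2 : a ≤ (k+1)*n - 1)
    (hj : 2 * (n - 1) + ((k+1)*n - 1 - a) < j) :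
    xx K ^ a ∈ Qc K k n j := by
  have hv := vmem (K := K) (k := k) (n := n) hj
  rw [vS_case3 K (by omega) (by omega) (by omega),
    show (k+1)*n - 1 - (2*(n-1) + ((k+1)*n - 1 - a) - 2*(n-1)) = a by omega,
    map_pow] at hv
  exact hv

end Aux9
namespace Aux9
open MvPowerSeries

variable (K : Type*) [Field K]
variable {k n : ℕ}

/-- Closure of `Q_j` under multiplying the next generator by `x` and `y`. -/
lemma hmul (hk : 1 ≤ k) (hn : 1 ≤ n) {j : ℕ}
    (hj : j < (k+1)*n + 2*n - 2) :
    xx K * pr K (vS K k n j) ∈ Qc K k n j ∧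
    yy K * pr K (vS K k n j) ∈ Qc K k n j := by
  have hA2 : 2 * n ≤ (k+1)*n := by nlinarith
  by_cases h1 : j < n - 1
  · -- v = x y^c, c = n-1-j
    rw [vS_case1 K h1, map_mul, map_pow]
    set c := n - 1 - j with hc
    have hc1 : 1 ≤ c := by omega
    have hgoal : xx K * yy K ^ (c+1) ∈ Qc K k n j := by
      by_cases hcn : c + 1 ≤ n - 1
      · exact xyc_mem K (by omega) hcn (by omega)
      · exact xy_high_mem K (by omega) j
    constructor
    · rw [show pr K (X 0) = xx K from rfl, show pr K (X 1) = yy K from rfl]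
      rw [xx_mul_xy K c hc1]
      exact hgoal
    · rw [show pr K (X 0) = xx K from rfl, show pr K (X 1) = yy K from rfl]
      rw [show yy K * (xx K * yy K ^ c) = xx K * yy K ^ (c+1) from by rw [pow_succ]; ring]
      exact hgoal
  · by_cases h2 : j < 2 * (n - 1)
    · -- v = y^b, b = 2(n-1)-j ; here n ≥ 2
      rw [vS_case2 K h1 h2, map_pow, show pr K (X 1) = yy K from rfl]
      set b := 2 * (n - 1) - j with hb
      have hb1 : 1 ≤ b := by omega
      have hb2 : b ≤ n - 1 := by omega
      constructor
      · exact xyc_mem K hb1 hb2 (by omega)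
      · rw [show yy K * yy K ^ b = yy K ^ (b+1) from by rw [pow_succ]; ring]
        by_cases hbn : b + 1 ≤ n - 1
        · exact yb_mem K (by omega) hbn (by omega)
        · rw [show b + 1 = n from by omega]
          exact yn_mem K j
    · by_cases h3 : j < 2 * (n - 1) + ((k+1)*n - 1)
      · -- v = x^a
        rw [vS_case3 K h1 h2 h3, map_pow, show pr K (X 0) = xx K from rfl]
        set a := (k+1)*n - 1 - (j - 2*(n-1)) with ha
        have ha1 : 1 ≤ a := by omega
        have ha2 : a ≤ (k+1)*n - 1 := by omega
        constructor
        · rw [show xx K * xx K ^ a = xx K ^ (a+1) from by rw [pow_succ]; ring]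
          by_cases haA : a + 1 ≤ (k+1)*n - 1
          · exact xa_mem K (by omega) haA (by omega)
          · rw [show a + 1 = (k+1)*n from by omega]
            exact xA_mem K j
        · rw [show yy K * xx K ^ a = xx K ^ a * yy K from by ring, xpow_mul_y K a ha1]
          by_cases han : a ≤ n - 1
          · exact xyc_mem K ha1 han (by omega)
          · exact xy_high_mem K (by omega) j
      · -- v = 1
        rw [vS_case4 K h1 h2 h3, map_one, mul_one, mul_one]
        constructor
        · rw [show xx K = xx K ^ 1 from (pow_one _).symm]
          exact xa_mem K le_rfl (by omega) (by omega)
        · rw [show yy K = yy K ^ 1 from (pow_one _).symm]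
          by_cases hn2 : 2 ≤ n
          · exact yb_mem K le_rfl (by omega) (by omega)
          · rw [show (1:ℕ) = n from by omega]
            exact yn_mem K j
end Aux9
namespace Aux9
open MvPowerSeries

/-- Helper: `x^e ∈ span s` whenever `x^f ∈ span s` and `f ≤ e`. -/
lemma pow_mem_of_le {R : Type*} [CommRing R] (x : R) {e f : ℕ} (hef : f ≤ e)
    {s : Set R} (hx : x ^ f ∈ Ideal.span s) : x ^ e ∈ Ideal.span s := by
  obtain ⟨d, rfl⟩ : ∃ d, e = d + f := ⟨e - f, by omega⟩
  rw [pow_add]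
  exact Ideal.mul_mem_left _ _ hx

/-- Helper: `x y^e ∈ span s` whenever `y^f ∈ span s` and `f ≤ e`. -/
lemma mul_pow_mem_of_le {R : Type*} [CommRing R] (x y : R) {e f : ℕ} (hef : f ≤ e)
    {s : Set R} (hy : y ^ f ∈ Ideal.span s) : x * y ^ e ∈ Ideal.span s := by
  obtain ⟨d, rfl⟩ : ∃ d, e = d + f := ⟨e - f, by omega⟩
  rw [pow_add, ← mul_assoc]
  exact Ideal.mul_mem_left _ _ hy

variable (K : Type*) [Field K]
variable {k n : ℕ}

/-- Strictness: the new generator is not in `Q_j`. -/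
lemma hstrict (hk : 1 ≤ k) (hn : 1 ≤ n) {j : ℕ}
    (hj : j < (k+1)*n + 2*n - 2) :
    pr K (vS K k n j) ∉ Qc K k n j := by
  have hA2 : 2 * n ≤ (k+1)*n := by nlinarith
  rw [Qc, mem_pr_span_iff]
  by_cases h1 : j < n - 1
  · -- v = x y^c
    set c := n - 1 - j with hc
    have hc1 : 1 ≤ c := by omega
    have hsub : Ideal.span (genS K k n j ∪ {rr K}) ≤
        Ideal.span {(X 0 : MvPowerSeries (Fin 2) K) ^ ((k+1)*n),
          (X 1 : MvPowerSeries (Fin 2) K) ^ (c+1), rr K} := by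
      rw [Ideal.span_le]
      rintro z (((rfl | rfl) | ⟨i, hi, rfl⟩) | rfl)
      · exact Ideal.subset_span (by simp)
      · exact pow_mem_of_le _ (show c+1 ≤ n from by omega) (Ideal.subset_span (by simp))
      · have hi' : i < j := hi
        rw [vS_case1 K (show i < n - 1 from by omega)]
        exact mul_pow_mem_of_le _ _ (show c+1 ≤ n-1-i from by omega)
          (Ideal.subset_span (by simp))
      · exact Ideal.subset_span (by simp)
    intro hmem
    rw [vS_case1 K h1] at hmem
    exact not_mem_xy_pow hc1 (show c + 2 ≤ (k+1)*n from by omega) (hsub hmem)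
  · by_cases h2 : j < 2 * (n - 1)
    · -- v = y^b
      set b := 2 * (n - 1) - j with hb
      have hb1 : 1 ≤ b := by omega
      have hX0 : (X 0 : MvPowerSeries (Fin 2) K) ^ 1 ∈
          Ideal.span {(X 0 : MvPowerSeries (Fin 2) K),
            (X 1 : MvPowerSeries (Fin 2) K) ^ (b+1)} := by
        rw [pow_one]; exact Ideal.subset_span (by simp)
      have hsub : Ideal.span (genS K k n j ∪ {rr K}) ≤
          Ideal.span {(X 0 : MvPowerSeries (Fin 2) K),
            (X 1 : MvPowerSeries (Fin 2) K) ^ (b+1)} := by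
        rw [Ideal.span_le]
        rintro z (((rfl | rfl) | ⟨i, hi, rfl⟩) | rfl)
        · exact pow_mem_of_le _ (show 1 ≤ (k+1)*n from by omega) hX0
        · exact pow_mem_of_le _ (show b+1 ≤ n from by omega) (Ideal.subset_span (by simp))
        · have hi' : i < j := hi
          by_cases hcase : i < n - 1
          · rw [vS_case1 K hcase, mul_comm]
            exact Ideal.mul_mem_left _ _ (Ideal.subset_span (by simp))
          · rw [vS_case2 K hcase (by omega)]
            exact pow_mem_of_le _ (show b+1 ≤ 2*(n-1)-i from by omega)
              (Ideal.subset_span (by simp))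
        · rw [show rr K = (X 1 * (X 0 - X 1)) * X 0 from by ring]
          exact Ideal.mul_mem_left _ _ (Ideal.subset_span (by simp))
      intro hmem
      rw [vS_case2 K h1 h2] at hmem
      exact not_mem_y_pow b (hsub hmem)
    · by_cases h3 : j < 2 * (n - 1) + ((k+1)*n - 1)
      · -- v = x^a
        set a := (k+1)*n - 1 - (j - 2*(n-1)) with ha
        have ha1 : 1 ≤ a := by omega
        have hX1 : (X 1 : MvPowerSeries (Fin 2) K) ^ 1 ∈
            Ideal.span {(X 0 : MvPowerSeries (Fin 2) K) ^ (a+1),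
              (X 1 : MvPowerSeries (Fin 2) K)} := by
          rw [pow_one]; exact Ideal.subset_span (by simp)
        have hsub : Ideal.span (genS K k n j ∪ {rr K}) ≤
            Ideal.span {(X 0 : MvPowerSeries (Fin 2) K) ^ (a+1),
              (X 1 : MvPowerSeries (Fin 2) K)} := by
          rw [Ideal.span_le]
          rintro z (((rfl | rfl) | ⟨i, hi, rfl⟩) | rfl)
          · exact pow_mem_of_le _ (show a+1 ≤ (k+1)*n from by omega)
              (Ideal.subset_span (by simp))
          · exact pow_mem_of_le _ (show 1 ≤ n from by omega) hX1
          · have hi' : i < j := hi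
            by_cases hcase : i < n - 1
            · rw [vS_case1 K hcase]
              exact mul_pow_mem_of_le _ _ (show 1 ≤ n-1-i from by omega) hX1
            · by_cases hcase2 : i < 2 * (n - 1)
              · rw [vS_case2 K hcase hcase2]
                exact pow_mem_of_le _ (show 1 ≤ 2*(n-1)-i from by omega) hX1
              · rw [vS_case3 K hcase hcase2 (by omega)]
                exact pow_mem_of_le _
                  (show a+1 ≤ (k+1)*n - 1 - (i - 2*(n-1)) from by omega)
                  (Ideal.subset_span (by simp))
          · rw [show rr K = (X 0 * (X 0 - X 1)) * X 1 from by ring]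
            exact Ideal.mul_mem_left _ _ (Ideal.subset_span (by simp))
        intro hmem
        rw [vS_case3 K h1 h2 h3] at hmem
        exact not_mem_x_pow (show a < a + 1 from by omega) (hsub hmem)
      · -- v = 1
        have hX0 : (X 0 : MvPowerSeries (Fin 2) K) ^ 1 ∈
            Ideal.span {(X 0 : MvPowerSeries (Fin 2) K),
              (X 1 : MvPowerSeries (Fin 2) K)} := by
          rw [pow_one]; exact Ideal.subset_span (by simp)
        have hX1 : (X 1 : MvPowerSeries (Fin 2) K) ^ 1 ∈
            Ideal.span {(X 0 : MvPowerSeries (Fin 2) K),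
              (X 1 : MvPowerSeries (Fin 2) K)} := by
          rw [pow_one]; exact Ideal.subset_span (by simp)
        have hsub : Ideal.span (genS K k n j ∪ {rr K}) ≤
            Ideal.span {(X 0 : MvPowerSeries (Fin 2) K),
              (X 1 : MvPowerSeries (Fin 2) K)} := by
          rw [Ideal.span_le]
          rintro z (((rfl | rfl) | ⟨i, hi, rfl⟩) | rfl)
          · exact pow_mem_of_le _ (show 1 ≤ (k+1)*n from by omega) hX0
          · exact pow_mem_of_le _ (show 1 ≤ n from by omega) hX1
          · have hi' : i < j := hi
            by_cases hcase : i < n - 1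
            · rw [vS_case1 K hcase]
              exact mul_pow_mem_of_le _ _ (show 1 ≤ n-1-i from by omega) hX1
            · by_cases hcase2 : i < 2 * (n - 1)
              · rw [vS_case2 K hcase hcase2]
                exact pow_mem_of_le _ (show 1 ≤ 2*(n-1)-i from by omega) hX1
              · rw [vS_case3 K hcase hcase2 (by omega)]
                exact pow_mem_of_le _
                  (show 1 ≤ (k+1)*n - 1 - (i - 2*(n-1)) from by omega) hX0
          · rw [show rr K = (X 1 * (X 0 - X 1)) * X 0 from by ring]
            exact Ideal.mul_mem_left _ _ (Ideal.subset_span (by simp))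
        intro hmem
        rw [vS_case4 K h1 h2 h3] at hmem
        have h10 := not_mem_x_pow (K := K) (show 0 < 1 from one_pos)
        rw [pow_zero, pow_one] at h10
        exact h10 (hsub hmem)
end Aux9
namespace Aux9
open MvPowerSeries

variable (K : Type*) [Field K]
variable {k n : ℕ}

lemma Qc_zero (hk : 1 ≤ k) (hn : 1 ≤ n) : Qc K k n 0 = (Ideal9 K k) ^ n := by
  rw [Ideal9_pow K k n hk hn, Qc, genS]
  have : {i : ℕ | i < 0} = ∅ := by ext i; simp
  rw [this, Set.image_empty, Set.union_empty, Set.image_pair, map_pow, map_pow]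
  rfl

lemma Qc_succ (j : ℕ) :
    Qc K k n (j+1) = Qc K k n j ⊔ Ideal.span {pr K (vS K k n j)} := by
  rw [Qc, Qc, genS, genS]
  have : {i : ℕ | i < j + 1} = insert j {i : ℕ | i < j} := by
    ext i; simp; omega
  rw [this, Set.image_insert_eq, Set.union_comm _ (insert _ _), Set.insert_union,
    Set.union_comm _ ({X 0 ^ ((k+1)*n), X 1 ^ n} : Set _), ← Set.union_singleton,
    Set.image_union, Ideal.span_union, Set.image_singleton]

lemma Qc_mono {i j : ℕ} (hij : i ≤ j) : Qc K k n i ≤ Qc K k n j := by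
  apply Ideal.span_mono
  apply Set.image_mono
  apply Set.union_subset_union_right
  apply Set.image_mono
  intro t ht
  exact lt_of_lt_of_le ht hij

lemma Qc_top (hk : 1 ≤ k) (hn : 1 ≤ n) : Qc K k n ((k+1)*n + 2*n - 2) = ⊤ := by
  have hA2 : 2 * n ≤ (k+1)*n := by nlinarith
  rw [Ideal.eq_top_iff_one]
  have h1 : pr K (vS K k n ((k+1)*n + 2*n - 2 - 1)) ∈ Qc K k n ((k+1)*n + 2*n - 2) :=
    vmem K (by omega)
  rwa [vS_case4 K (by omega) (by omega) (by omega), map_one] at h1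

lemma Qc_lt (hk : 1 ≤ k) (hn : 1 ≤ n) {j : ℕ} (hj : j < (k+1)*n + 2*n - 2) :
    Qc K k n j < Qc K k n (j+1) := by
  refine lt_of_le_of_ne (Qc_mono K (by omega)) (fun heq => ?_)
  have hv : pr K (vS K k n j) ∈ Qc K k n (j+1) := vmem K (by omega)
  rw [← heq] at hv
  exact hstrict K hk hn hj hv

lemma Qc_cov (hk : 1 ≤ k) (hn : 1 ≤ n) {j : ℕ} (hj : j < (k+1)*n + 2*n - 2) :
    ∀ N : Ideal (Ring9 K), Qc K k n j ≤ N → N ≤ Qc K k n (j+1) →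
      N = Qc K k n j ∨ N = Qc K k n (j+1) := by
  intro N h1 h2
  obtain ⟨hx, hy⟩ := hmul K hk hn hj
  have := cov_step K (Qc K k n j) (pr K (vS K k n j)) hx hy N h1 (by rw [← Qc_succ]; exact h2)
  rcases this with h | h
  · exact Or.inl h
  · right; rw [h, ← Qc_succ]

/-- Transfer: an ideal chain with covering steps gives the length of `R ⧸ I`. -/
lemma hasLength_quotient {R' : Type*} [CommRing R'] (I : Ideal R') (m : ℕ)
    (Q : ℕ → Ideal R')
    (hle : ∀ j, I ≤ Q j) (h0 : Q 0 = I) (htop : Q m = ⊤)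
    (hlt : ∀ j < m, Q j < Q (j+1))
    (hcov : ∀ j < m, ∀ N : Ideal R', Q j ≤ N → N ≤ Q (j+1) → N = Q j ∨ N = Q (j+1)) :
    HasLength R' (R' ⧸ I) m := by
  have hcm : ∀ j, Submodule.comap I.mkQ (Submodule.map I.mkQ (Q j)) = Q j := by
    intro j
    rw [Submodule.comap_map_mkQ, sup_eq_right.mpr (hle j)]
  have hmc : ∀ N : Submodule R' (R' ⧸ I),
      Submodule.map I.mkQ (Submodule.comap I.mkQ N) = N := by
    intro N
    rw [Submodule.map_comap_eq, Submodule.range_mkQ, top_inf_eq]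
  apply hasLength_of_chain m (fun j => Submodule.map I.mkQ (Q j))
  · rw [h0, eq_bot_iff]
    rintro x ⟨y, hy, rfl⟩
    rw [Submodule.mem_bot, Submodule.mkQ_apply]
    exact (Submodule.Quotient.mk_eq_zero _).mpr hy
  · rw [htop, Submodule.map_top, Submodule.range_mkQ]
  · intro j hj
    refine lt_of_le_of_ne (Submodule.map_mono (hlt j hj).le) (fun heq => ?_)
    have := congrArg (Submodule.comap I.mkQ) heq
    rw [hcm, hcm] at this
    exact (hlt j hj).ne this
  · intro j hj N h1 h2
    have hc1 : Q j ≤ Submodule.comap I.mkQ N := by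
      rw [← hcm j]; exact Submodule.comap_mono h1
    have hc2 : Submodule.comap I.mkQ N ≤ Q (j+1) := by
      rw [← hcm (j+1)]; exact Submodule.comap_mono h2
    rcases hcov j hj _ hc1 hc2 with h | h
    · left; rw [← hmc N, h]
    · right; rw [← hmc N, h]

end Aux9

/-- For `R = K[[x,y]]/(xy(x-y))`, `k ≥ 1` and `I = (x^{k+1}, y)`:
`e₀(I) = k + 3` and `e₁(I) = 2`. -/
theorem stmt9 (K : Type*) [Field K] (k : ℕ) (hk : 1 ≤ k) :
    HasHilbCoeffs1 (Ideal9 K k) ((k : ℤ) + 3) 2 := by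
  refine ⟨1, fun n hn => ?_⟩
  have hA2 : 2 * n ≤ (k+1)*n := by nlinarith
  refine ⟨(k+1)*n + 2*n - 2, ?_, ?_⟩
  · apply Aux9.hasLength_quotient ((Ideal9 K k) ^ n) ((k+1)*n + 2*n - 2) (Aux9.Qc K k n)
    · intro j
      rw [← Aux9.Qc_zero K hk hn]
      exact Aux9.Qc_mono K (Nat.zero_le j)
    · exact Aux9.Qc_zero K hk hn
    · exact Aux9.Qc_top K hk hn
    · intro j hj
      exact Aux9.Qc_lt K hk hn hj
    · intro j hj
      exact Aux9.Qc_cov K hk hn hj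
  · have h2 : 2 ≤ (k+1)*n + 2*n := by omega
    rw [Nat.cast_sub h2]
    push_cast
    ring
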